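/- Let D be a round digraph on n ≥ 1 vertices. Then δ⁺(D) = cn(D) = fvs(D), where δ⁺(D) is the minimum out-degree of D. -/

import Mathlib

open scoped Classical

/-- The out-neighborhood of a set `S` in the digraph with arc relation `A`. -/
noncomputable def Nplus {V : Type} [Fintype V] (A : V → V → Prop) (S : Finset V) : Finset V :=
  Finset.univ.filter (fun y => ∃ x ∈ S, A x y)

/-- The robber territories associated with a cop strategy `W` (0-indexed:
`terr A W i` is the paper's `R_{i+1}`). -/
noncomputable def terr {V : Type} [Fintype V] [DecidableEq V]
    (A : V → V → Prop) (W : ℕ → Finset V) : ℕ → Finset V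
  | 0 => Finset.univ \ W 0
  | i + 1 => Nplus A (terr A W i) \ W (i + 1)

/-- A cop strategy uses at most `k` cops. -/
def UsesAtMost {V : Type} (W : ℕ → Finset V) (k : ℕ) : Prop :=
  ∀ i, (W i).card ≤ k

/-- The cop number: the least `k` admitting a winning strategy using `k` cops. -/
noncomputable def copNumber {V : Type} [Fintype V] [DecidableEq V] (A : V → V → Prop) : ℕ :=
  sInf {k | ∃ W : ℕ → Finset V, UsesAtMost W k ∧ ∃ t, terr A W t = ∅}

/-- The subdigraph induced by `S` is acyclic (loops count as cycles). -/
def AcyclicOn {V : Type} (A : V → V → Prop) (S : Finset V) : Prop :=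
  ∀ v ∈ S, ¬ Relation.TransGen (fun x y => x ∈ S ∧ y ∈ S ∧ A x y) v v

/-- The minimum size of a feedback vertex set of the digraph with arc relation `A`. -/
noncomputable def fvsNumber {V : Type} [Fintype V] [DecidableEq V] (A : V → V → Prop) : ℕ :=
  sInf {c | ∃ X : Finset V, X.card = c ∧ AcyclicOn A (Finset.univ \ X)}

/-- The minimum out-degree of the digraph with arc relation `A`. -/
noncomputable def minOutDeg {V : Type} [Fintype V] (A : V → V → Prop) : ℕ :=
  sInf {d | ∃ v : V, (Finset.univ.filter (fun u => A v u)).card = d}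

/-!
With fewer than `δ⁺` cops the robber territories never empty: a vertex of `R_i` has at least
`δ⁺` out-neighbours, all in `N⁺(R_i)`, and fewer of them are covered. So `δ⁺ ≤ cn`.
Cops parked for good on a feedback vertex set win, because the territories then shrink strictly
until they are empty: a nonempty territory equal to its successor would be a nonempty set inside
the acyclic part each of whose vertices has an in-neighbour in it. So `cn ≤ fvs`.
In a round digraph the out-neighbourhood of any vertex `w` is a feedback vertex set: if an arc
`x → y` avoiding `N⁺(w)` went backwards in the cyclic order starting just after `w`, the
in-interval of `y` would stretch from `x` over `w`, making `y` an out-neighbour of `w`.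
So `fvs ≤ δ⁺`.
-/

open Finset

section General

variable {V : Type} (A : V → V → Prop)

lemma acyclicOn_of_lt (S : Finset V) (f : V → ℕ)
    (hf : ∀ x ∈ S, ∀ y ∈ S, A x y → f x < f y) : AcyclicOn A S := by
  intro u _ hu
  have := Relation.TransGen.lift f (p := (· < ·))
    (fun x y ⟨hx, hy, hxy⟩ => hf x hx y hy hxy) u u hu
  rw [Relation.transGen_eq_self] at this
  exact lt_irrefl _ this

lemma Finset.sdiff_nonempty_of_card_lt [DecidableEq V] {S W : Finset V} (h : #W < #S) :
    (S \ W).Nonempty :=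
  sdiff_nonempty.mpr fun hSW => (card_le_card hSW).not_gt h

lemma Finset.eq_empty_of_antitone_of_stable [Fintype V] (s : ℕ → Finset V)
    (hs : Antitone s) (hstable : ∀ t, s (t + 1) = s t → s t = ∅) :
    s (Fintype.card V) = ∅ := by
  have hcard : ∀ t, #(s t) ≤ Fintype.card V - t := by
    intro t
    induction t with
    | zero => exact card_le_univ _
    | succ t ih =>
      by_cases heq : s (t + 1) = s t
      · simp [heq, hstable t heq]
      · have := card_lt_card (ssubset_of_subset_of_ne (hs (by omega : t ≤ t + 1)) heq)
        omega
  exact card_eq_zero.mp (Nat.le_zero.mp (by simpa using hcard (Fintype.card V)))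

variable [Fintype V]

lemma Nplus_mono {S T : Finset V} (h : S ⊆ T) : Nplus A S ⊆ Nplus A T := by
  intro y hy
  simp only [Nplus, mem_filter, mem_univ, true_and] at hy ⊢
  obtain ⟨x, hx, hxy⟩ := hy
  exact ⟨x, h hx, hxy⟩

lemma filter_adj_subset_Nplus {S : Finset V} {x : V} (hx : x ∈ S) :
    univ.filter (A x) ⊆ Nplus A S := by
  intro y hy
  simp only [Nplus, mem_filter, mem_univ, true_and] at hy ⊢
  exact ⟨x, hx, hy⟩

/-- A vertex of `T` minimal for the reachability order of the acyclic subdigraph induced by `S`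
has no in-neighbour in `T`. -/
lemma AcyclicOn.not_subset_Nplus {S T : Finset V} (hS : AcyclicOn A S) (hTS : T ⊆ S)
    (hT : T.Nonempty) : ¬ T ⊆ Nplus A T := by
  intro hTN
  let R := Relation.TransGen (fun x y => x ∈ S ∧ y ∈ S ∧ A x y)
  have : IsTrans V R := ⟨fun _ _ _ => Relation.TransGen.trans⟩
  have : Std.Irrefl R := ⟨fun u hu => hS u (by cases hu <;> simp_all) hu⟩
  obtain ⟨y, hyT, hmin⟩ := (Finite.wellFounded_of_trans_of_irrefl R).has_min (T : Set V) hT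
  have hy := hTN hyT
  simp only [Nplus, mem_filter, mem_univ, true_and] at hy
  obtain ⟨x, hxT, hxy⟩ := hy
  exact hmin x hxT (.single ⟨hTS hxT, hTS hyT, hxy⟩)

lemma minOutDeg_le (w : V) : minOutDeg A ≤ #(univ.filter (A w)) :=
  Nat.sInf_le ⟨w, rfl⟩

lemma exists_outDeg_eq_minOutDeg [Nonempty V] :
    ∃ w : V, #(univ.filter (A w)) = minOutDeg A :=
  Nat.sInf_mem (s := {d | ∃ w : V, #(univ.filter (A w)) = d}) ⟨_, Classical.arbitrary V, rfl⟩

lemma minOutDeg_le_card : minOutDeg A ≤ Fintype.card V := by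
  cases isEmpty_or_nonempty V
  · simp [minOutDeg]
  · obtain ⟨w, hw⟩ := exists_outDeg_eq_minOutDeg A
    exact hw ▸ card_filter_le _ _

variable [DecidableEq V]

lemma copNumber_spec :
    ∃ W : ℕ → Finset V, UsesAtMost W (copNumber A) ∧ ∃ t, terr A W t = ∅ :=
  Nat.sInf_mem (s := {k | ∃ W : ℕ → Finset V, UsesAtMost W k ∧ ∃ t, terr A W t = ∅})
    ⟨Fintype.card V, fun _ => univ, fun _ => card_le_univ _, 0, by simp [terr]⟩

lemma fvsNumber_spec : ∃ X : Finset V, #X = fvsNumber A ∧ AcyclicOn A (univ \ X) :=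
  Nat.sInf_mem (s := {c | ∃ X : Finset V, #X = c ∧ AcyclicOn A (univ \ X)})
    ⟨Fintype.card V, univ, card_univ, by simp [AcyclicOn]⟩

lemma terr_nonempty_of_card_lt_minOutDeg (W : ℕ → Finset V) (hW : ∀ i, #(W i) < minOutDeg A)
    (t : ℕ) : (terr A W t).Nonempty := by
  induction t with
  | zero =>
    refine sdiff_nonempty_of_card_lt ?_
    simpa using (hW 0).trans_le (minOutDeg_le_card A)
  | succ t ih =>
    obtain ⟨x, hx⟩ := ih
    refine sdiff_nonempty_of_card_lt ((hW _).trans_le ?_)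
    exact (minOutDeg_le A x).trans (card_le_card (filter_adj_subset_Nplus A hx))

theorem minOutDeg_le_copNumber : minOutDeg A ≤ copNumber A := by
  obtain ⟨W, hW, t, ht⟩ := copNumber_spec A
  by_contra! h
  exact (terr_nonempty_of_card_lt_minOutDeg A W (fun i => (hW i).trans_lt h) t).ne_empty ht

lemma terr_const_antitone (X : Finset V) : Antitone (terr A fun _ => X) := by
  refine antitone_nat_of_succ_le fun t => ?_
  induction t with
  | zero => exact sdiff_subset_sdiff (subset_univ _) le_rfl
  | succ t ih => exact sdiff_subset_sdiff (Nplus_mono A ih) le_rfl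

lemma terr_const_eq_empty {X : Finset V} (hX : AcyclicOn A (univ \ X)) :
    terr A (fun _ => X) (Fintype.card V) = ∅ := by
  refine eq_empty_of_antitone_of_stable _ (terr_const_antitone A X) fun t ht => ?_
  by_contra hne
  refine hX.not_subset_Nplus A (terr_const_antitone A X t.zero_le)
    (nonempty_iff_ne_empty.mpr hne) ?_
  exact ht.symm.subset.trans sdiff_subset

theorem copNumber_le_fvsNumber : copNumber A ≤ fvsNumber A := by
  obtain ⟨X, hXcard, hX⟩ := fvsNumber_spec A
  exact Nat.sInf_le ⟨fun _ => X, fun _ => hXcard.le, _, terr_const_eq_empty A hX⟩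

end General

section Round

variable {V : Type} (A : V → V → Prop) {n : ℕ} [NeZero n] (v : ZMod n ≃ V)
  (hin : ∀ (i : ZMod n) (s t : ℕ), 1 ≤ s → s ≤ t → t ≤ n →
    A (v (i - (t : ZMod n))) (v i) → A (v (i - (s : ZMod n))) (v i))
include hin

/-- Positions are counted cyclically from `i + 1`, so that `v i` comes last: an arc `x → y` that
does not go forward has `v i` inside the in-interval of `y`. -/
lemma position_lt_of_adj (i : ZMod n) {x y : V} (hxy : A x y) (hy : ¬ A (v i) y) :
    (v.symm x - i - 1).val < (v.symm y - i - 1).val := by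
  set p := (v.symm x - i - 1).val
  set q := (v.symm y - i - 1).val
  have hpn : p < n := ZMod.val_lt _
  have hpcast : (p : ZMod n) = v.symm x - i - 1 := ZMod.natCast_zmod_val _
  have hqcast : (q : ZMod n) = v.symm y - i - 1 := ZMod.natCast_zmod_val _
  by_contra! hqp
  have hx : v (v.symm y - ((n - p + q : ℕ) : ZMod n)) = x := by
    rw [Nat.cast_add, Nat.cast_sub hpn.le, ZMod.natCast_self, hpcast, hqcast]
    simp
  have hw : v (v.symm y - ((q + 1 : ℕ) : ZMod n)) = v i := by
    rw [Nat.cast_succ, hqcast]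
    simp
  have := hin (v.symm y) (q + 1) (n - p + q) (by omega) (by omega) (by omega)
    (by rwa [hx, Equiv.apply_symm_apply])
  rw [hw, Equiv.apply_symm_apply] at this
  exact hy this

lemma acyclicOn_compl_filter_adj [Fintype V] [DecidableEq V] (w : V) :
    AcyclicOn A (univ \ univ.filter (A w)) := by
  refine acyclicOn_of_lt A _ (fun u => (v.symm u - v.symm w - 1).val) fun x _ y hy hxy => ?_
  simp only [mem_sdiff, mem_univ, mem_filter, true_and] at hy
  exact position_lt_of_adj A v hin _ hxy (by simpa using hy)

theorem fvsNumber_le_minOutDeg_of_round [Fintype V] [DecidableEq V] :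
    fvsNumber A ≤ minOutDeg A := by
  have : Nonempty V := ⟨v 0⟩
  obtain ⟨w, hw⟩ := exists_outDeg_eq_minOutDeg A
  exact hw ▸ Nat.sInf_le ⟨_, rfl, acyclicOn_compl_filter_adj A v hin w⟩

end Round

theorem round_copNumber_general {V : Type} [Fintype V] [DecidableEq V] (A : V → V → Prop)
    (n : ℕ) (hn : 1 ≤ n)
    (v : ZMod n ≃ V)
    (hin : ∀ (i : ZMod n) (s t : ℕ), 1 ≤ s → s ≤ t → t ≤ n →
      A (v (i - (t : ZMod n))) (v i) → A (v (i - (s : ZMod n))) (v i)) :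
    minOutDeg A = copNumber A ∧ copNumber A = fvsNumber A := by
  have : NeZero n := ⟨by omega⟩
  have h1 := minOutDeg_le_copNumber A
  have h2 := copNumber_le_fvsNumber A
  have h3 := fvsNumber_le_minOutDeg_of_round A v hin
  omega

/-- For a round digraph `D` on `n ≥ 1` vertices (round ordering given by the
bijection `v : ZMod n ≃ V`, where out-neighborhoods and in-neighborhoods are
cyclic intervals starting right after, resp. ending right before, each vertex),
`δ⁺(D) = cn(D) = fvs(D)`. -/
theorem round_copNumber {V : Type} [Fintype V] [DecidableEq V] (A : V → V → Prop)
    (n : ℕ) (hn : 1 ≤ n) (hcard : Fintype.card V = n)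
    (v : ZMod n ≃ V)
    (hout : ∀ (i : ZMod n) (s t : ℕ), 1 ≤ s → s ≤ t → t ≤ n →
      A (v i) (v (i + (t : ZMod n))) → A (v i) (v (i + (s : ZMod n))))
    (hin : ∀ (i : ZMod n) (s t : ℕ), 1 ≤ s → s ≤ t → t ≤ n →
      A (v (i - (t : ZMod n))) (v i) → A (v (i - (s : ZMod n))) (v i)) :
    minOutDeg A = copNumber A ∧ copNumber A = fvsNumber A :=
  round_copNumber_general A n hn v hin
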